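/- For every natural number k, maxMdepth(bestCase(k)) = k; that is, the multiway-tree depth of the best-case number of representation size k is exactly k. -/

import Mathlib

/-- The pairing function `c`. -/
def c (i j : ℕ) : ℕ := if Odd j then 2 ^ (i + 1) * j else 2 ^ (i + 1) * (j + 1) - 1

/-- The inverse of `c` on positive naturals (returns `(0,0)` at `0`). -/
def c' (n : ℕ) : ℕ × ℕ :=
  (padicValNat 2 (n + n % 2) - 1, (n + n % 2) / 2 ^ padicValNat 2 (n + n % 2) - n % 2)

lemma c'_fst_lt {n : ℕ} (hn : 0 < n) : (c' n).1 < n := by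
  have hm : 0 < n + n % 2 := by omega
  have hdvd : (2 : ℕ) ^ padicValNat 2 (n + n % 2) ∣ (n + n % 2) := pow_padicValNat_dvd
  have hle : (2 : ℕ) ^ padicValNat 2 (n + n % 2) ≤ n + n % 2 := Nat.le_of_dvd hm hdvd
  have hlt : padicValNat 2 (n + n % 2) < 2 ^ padicValNat 2 (n + n % 2) := Nat.lt_two_pow_self
  simp only [c']
  generalize hv : padicValNat 2 (n + n % 2) = v at *
  generalize hp : (2 : ℕ) ^ v = p at *
  omega

lemma c'_snd_lt {n : ℕ} (hn : 0 < n) : (c' n).2 < n := by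
  have hm : 0 < n + n % 2 := by omega
  have h2 : (2 : ℕ) ∣ (n + n % 2) := by omega
  have hv : 1 ≤ padicValNat 2 (n + n % 2) := one_le_padicValNat_of_dvd hm.ne' h2
  have h2le : (2 : ℕ) ≤ 2 ^ padicValNat 2 (n + n % 2) := by
    calc (2:ℕ) = 2 ^ 1 := (pow_one 2).symm
    _ ≤ 2 ^ padicValNat 2 (n + n % 2) := Nat.pow_le_pow_right (by norm_num) hv
  have hle : (n + n % 2) / 2 ^ padicValNat 2 (n + n % 2) ≤ (n + n % 2) / 2 :=
    Nat.div_le_div_left h2le (by norm_num)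
  simp only [c']
  generalize hq : (n + n % 2) / 2 ^ padicValNat 2 (n + n % 2) = q at *
  omega

lemma c'_fst_lt_of_lt {m n : ℕ} (h : m < n) : (c' m).1 < n := by
  rcases Nat.eq_zero_or_pos m with rfl | hm
  · simp [c']; omega
  · exact lt_trans (c'_fst_lt hm) h

lemma c'_snd_lt_of_lt {m n : ℕ} (h : m < n) : (c' m).2 < n := by
  rcases Nat.eq_zero_or_pos m with rfl | hm
  · simp [c']; omega
  · exact lt_trans (c'_snd_lt hm) h

def maxMdepth : ℕ → ℕ
  | 0 => 0
  | n + 1 => max (1 + maxMdepth (c' (n + 1)).1) (maxMdepth (c' (n + 1)).2)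
  decreasing_by
  · exact c'_fst_lt (Nat.succ_pos n)
  · exact c'_snd_lt (Nat.succ_pos n)

/-- best case: iterated `x ↦ c x 0` (towers of exponents). -/
def bestCase (k : ℕ) : ℕ := (fun x => c x 0)^[k] 0

/-- worst case: iterated `x ↦ c 0 x`. -/
def worstCase (k : ℕ) : ℕ := (fun x => c 0 x)^[k] 0

/-!
`c'` inverts `c`, so unfolding `maxMdepth` once gives
`maxMdepth (c i j) = max (1 + maxMdepth i) (maxMdepth j)`. Along the best case `j = 0` and
`maxMdepth 0 = 0`, so each application of `x ↦ c x 0` raises the depth by exactly one.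
-/

theorem c_pos (i j : ℕ) : 0 < c i j := by
  unfold c
  split_ifs with hj
  · exact Nat.mul_pos (by positivity) hj.pos
  · have : 2 ≤ 2 ^ (i + 1) * (j + 1) :=
      le_mul_of_le_of_one_le (Nat.le_self_pow i.succ_ne_zero 2) j.succ_pos
    omega

theorem c'_eq_of_add_mod_two_eq {n a m : ℕ} (hm : Odd m) (h : n + n % 2 = 2 ^ (a + 1) * m) :
    c' n = (a, m - n % 2) := by
  have hval : padicValNat 2 (2 ^ (a + 1) * m) = a + 1 := by
    rw [padicValNat.mul (by positivity) hm.pos.ne', padicValNat.prime_pow,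
      padicValNat.eq_zero_of_not_dvd hm.not_two_dvd_nat, add_zero]
  rw [c', h, hval, Nat.mul_div_cancel_left _ (by positivity), Nat.add_sub_cancel]

theorem c'_c (i j : ℕ) : c' (c i j) = (i, j) := by
  have htwo : 2 ∣ 2 ^ (i + 1) := dvd_pow_self 2 i.succ_ne_zero
  by_cases hj : Odd j
  · have hmod : c i j % 2 = 0 := by
      rw [c, if_pos hj]
      exact Nat.mod_eq_zero_of_dvd (htwo.mul_right j)
    rw [c'_eq_of_add_mod_two_eq hj (by rw [hmod, add_zero, c, if_pos hj]), hmod, Nat.sub_zero]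
  · have hj1 : Odd (j + 1) := (Nat.not_odd_iff_even.mp hj).add_one
    have hdvd : 2 ∣ 2 ^ (i + 1) * (j + 1) := htwo.mul_right _
    have hpos : 0 < 2 ^ (i + 1) * (j + 1) := by positivity
    have hmod : c i j % 2 = 1 := by
      rw [c, if_neg hj]
      omega
    rw [c'_eq_of_add_mod_two_eq (a := i) hj1 (by rw [hmod, c, if_neg hj]; omega), hmod,
      Nat.add_sub_cancel]

theorem maxMdepth_c (i j : ℕ) : maxMdepth (c i j) = max (1 + maxMdepth i) (maxMdepth j) := by
  obtain ⟨n, hn⟩ := Nat.exists_eq_add_one_of_ne_zero (c_pos i j).ne'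
  rw [hn, maxMdepth, ← hn, c'_c]

theorem maxMdepth_bestCase (k : ℕ) : maxMdepth (bestCase k) = k := by
  induction k with
  | zero => simp [bestCase, maxMdepth]
  | succ k ih =>
    rw [bestCase, Function.iterate_succ_apply', ← bestCase, maxMdepth_c, ih, maxMdepth]
    omega
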